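/- arXiv:2303.02073 — 4 statements merged into one kernel-verified Lean document; each statement's English description precedes it below -/
import Mathlib

section
/- Let π* be an expert policy and π a learner policy. Define the intervention policy π' which plays π*(·|s) at step h whenever Q_h^{π*}(s, π*) − Q_h^{π*}(s, π) ≥ p and plays π(·|s) otherwise. Then J(π') ≥ J(π*) − pH. -/
open Finset

noncomputable section

attribute [local instance] Classical.propDecidable

variable {S A : Type*}

/-- `p` is a probability distribution on a finite type. -/
def IsDist {X : Type*} [Fintype X] (p : X → ℝ) : Prop :=
  (∀ x, 0 ≤ p x) ∧ ∑ x, p x = 1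

/-- A (stochastic) policy: a distribution over actions at each state. -/
def IsPolicy [Fintype A] (π : S → A → ℝ) : Prop := ∀ s, IsDist (π s)

/-- A transition kernel. -/
def IsKernel [Fintype S] (P : S → A → S → ℝ) : Prop := ∀ s a, IsDist (P s a)

/-- Total variation distance on a finite type. -/
def tvDist {X : Type*} [Fintype X] (p q : X → ℝ) : ℝ := (1/2) * ∑ x, |p x - q x|

variable [Fintype S] [Fintype A]

/-- Q-value for a (possibly nonstationary) policy `πt` (indexed by time step):
`Qn P r πt k t s a` is the expected reward-to-go with `k` steps remaining, at current time
step `t`, taking action `a` in state `s` and thereafter following `πt`. -/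
def Qn (P : S → A → S → ℝ) (r : S → A → ℝ) (πt : ℕ → S → A → ℝ) :
    ℕ → ℕ → S → A → ℝ
  | 0, _ => fun _ _ => 0
  | k+1, t => fun s a =>
      r s a + ∑ s', P s a s' * ∑ a', πt (t+1) s' a' * Qn P r πt k (t+1) s' a'

/-- Expected Q-value when the first action is drawn from `π''`. -/
def QEn (P : S → A → S → ℝ) (r : S → A → ℝ) (πt : ℕ → S → A → ℝ)
    (k t : ℕ) (s : S) (π'' : S → A → ℝ) : ℝ :=
  ∑ a, π'' s a * Qn P r πt k t s a

/-- State distribution at (0-indexed) step `h` when following `πt` from initial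
distribution `ρ`. -/
def stateDistN (P : S → A → S → ℝ) (ρ : S → ℝ) (πt : ℕ → S → A → ℝ) : ℕ → S → ℝ
  | 0 => ρ
  | h+1 => fun s' => ∑ s, ∑ a, stateDistN P ρ πt h s * πt h s a * P s a s'

/-- Policy value: expected cumulative reward over horizon `H`. -/
def Jn (P : S → A → S → ℝ) (r : S → A → ℝ) (ρ : S → ℝ) (H : ℕ)
    (πt : ℕ → S → A → ℝ) : ℝ :=
  ∑ s, ρ s * QEn P r πt H 0 s (πt 0)

/-- Stationary-policy Q-value with `k` steps remaining. -/
def Qst (P : S → A → S → ℝ) (r : S → A → ℝ) (π : S → A → ℝ) (k : ℕ) :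
    S → A → ℝ := Qn P r (fun _ => π) k 0

/-- Stationary expected Q-value, first action drawn from `π''`. -/
def QE (P : S → A → S → ℝ) (r : S → A → ℝ) (π : S → A → ℝ) (k : ℕ) (s : S)
    (π'' : S → A → ℝ) : ℝ := ∑ a, π'' s a * Qst P r π k s a

/-- State distribution at (0-indexed) step `h` under a stationary policy. -/
def stateDist (P : S → A → S → ℝ) (ρ : S → ℝ) (π : S → A → ℝ) : ℕ → S → ℝ :=
  stateDistN P ρ (fun _ => π)

/-- Policy value of a stationary policy. -/
def J (P : S → A → S → ℝ) (r : S → A → ℝ) (ρ : S → ℝ) (H : ℕ)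
    (π : S → A → ℝ) : ℝ := Jn P r ρ H (fun _ => π)

lemma Qn_const (P : S → A → S → ℝ) (r : S → A → ℝ) (π : S → A → ℝ) :
    ∀ k t, Qn P r (fun _ => π) k t = Qn P r (fun _ => π) k 0
  | 0, _ => rfl
  | k+1, t => by
      funext s a
      simp only [Qn]
      rw [Qn_const P r π k (t+1), Qn_const P r π k (0+1)]

lemma intervention_key (P : S → A → S → ℝ) (r : S → A → ℝ) (H : ℕ)
    (hP : IsKernel P)
    (πstar π : S → A → ℝ) (hstar : IsPolicy πstar) (hπ : IsPolicy π)
    (p : ℝ) (hp : 0 ≤ p)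
    (π' : ℕ → S → A → ℝ)
    (hπ' : ∀ h s, π' h s =
      if p ≤ QE P r πstar (H - h) s πstar - QE P r πstar (H - h) s π
      then πstar s else π s) :
    ∀ k t s, H = k + t →
      QE P r πstar k s πstar - QEn P r π' k t s (π' t) ≤ p * k := by
  intro k
  induction k with
  | zero =>
    intro t s _
    simp [QE, QEn, Qst, Qn]
  | succ m ih =>
    intro t s hH
    have hHt : H - t = m + 1 := by omega
    have hπ'dist : IsDist (π' t s) := by
      rw [hπ' t s]; split
      · exact hstar s
      · exact hπ s
    -- step 1: one-step gap ≤ p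
    have h1 : QE P r πstar (m+1) s πstar - ∑ a, π' t s a * Qst P r πstar (m+1) s a ≤ p := by
      by_cases hc : p ≤ QE P r πstar (H - t) s πstar - QE P r πstar (H - t) s π
      · rw [hπ' t s, if_pos hc]
        simpa [QE] using hp
      · rw [hπ' t s, if_neg hc]
        push_neg at hc
        rw [hHt] at hc
        exact le_of_lt hc
    -- step 2: future gap
    have hQdiff : ∀ a, Qst P r πstar (m+1) s a - Qn P r π' (m+1) t s a
        = ∑ s', P s a s' *
            (QE P r πstar m s' πstar - QEn P r π' m (t+1) s' (π' (t+1))) := by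
      intro a
      simp only [Qst, Qn, QE, QEn]
      rw [Qn_const P r πstar m (0+1)]
      simp only [mul_sub, Finset.sum_sub_distrib]
      ring
    have h2 : ∀ a, Qst P r πstar (m+1) s a - Qn P r π' (m+1) t s a ≤ p * m := by
      intro a
      rw [hQdiff a]
      calc ∑ s', P s a s' *
            (QE P r πstar m s' πstar - QEn P r π' m (t+1) s' (π' (t+1)))
          ≤ ∑ s', P s a s' * (p * m) := by
            apply Finset.sum_le_sum
            intro s' _
            exact mul_le_mul_of_nonneg_left (ih (t+1) s' (by omega)) ((hP s a).1 s')
        _ = p * m := by rw [← Finset.sum_mul, (hP s a).2, one_mul]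
    -- combine
    have hsplit : QE P r πstar (m+1) s πstar - QEn P r π' (m+1) t s (π' t)
        = (QE P r πstar (m+1) s πstar - ∑ a, π' t s a * Qst P r πstar (m+1) s a)
          + ∑ a, π' t s a * (Qst P r πstar (m+1) s a - Qn P r π' (m+1) t s a) := by
      simp only [QEn, mul_sub, Finset.sum_sub_distrib]
      ring
    rw [hsplit]
    have h3 : ∑ a, π' t s a * (Qst P r πstar (m+1) s a - Qn P r π' (m+1) t s a)
        ≤ p * m := by
      calc ∑ a, π' t s a * (Qst P r πstar (m+1) s a - Qn P r π' (m+1) t s a)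
          ≤ ∑ a, π' t s a * (p * m) := by
            apply Finset.sum_le_sum
            intro a _
            exact mul_le_mul_of_nonneg_left (h2 a) (hπ'dist.1 a)
        _ = p * m := by rw [← Finset.sum_mul, hπ'dist.2, one_mul]
    have : (((m : ℕ) + 1 : ℕ) : ℝ) = (m : ℝ) + 1 := by push_cast; ring
    rw [this]
    nlinarith [h1, h3]

/-- Safety of the intervention policy: `J(π') ≥ J(π*) − pH`. The (nonstationary)
intervention policy `π'` plays `π*` at step `h` whenever the expert Q-gap is at least `p`. -/
theorem intervention_safety
    (P : S → A → S → ℝ) (r : S → A → ℝ) (ρ : S → ℝ) (H : ℕ)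
    (hP : IsKernel P) (hρ : IsDist ρ) (hr : ∀ s a, 0 ≤ r s a ∧ r s a ≤ 1)
    (πstar π : S → A → ℝ) (hstar : IsPolicy πstar) (hπ : IsPolicy π)
    (p : ℝ) (hp : 0 ≤ p)
    (π' : ℕ → S → A → ℝ)
    (hπ' : ∀ h s, π' h s =
      if p ≤ QE P r πstar (H - h) s πstar - QE P r πstar (H - h) s π
      then πstar s else π s) :
    Jn P r ρ H π' ≥ J P r ρ H πstar - p * H := by
  have key := intervention_key P r H hP πstar π hstar hπ p hp π' hπ'
  have hJ : J P r ρ H πstar - Jn P r ρ H π'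
      = ∑ s, ρ s * (QE P r πstar H s πstar - QEn P r π' H 0 s (π' 0)) := by
    simp only [J, Jn, QE, QEn, Qst, mul_sub, Finset.sum_sub_distrib]
  have hb : J P r ρ H πstar - Jn P r ρ H π' ≤ p * H := by
    rw [hJ]
    calc ∑ s, ρ s * (QE P r πstar H s πstar - QEn P r π' H 0 s (π' 0))
        ≤ ∑ s, ρ s * (p * H) := by
          apply Finset.sum_le_sum
          intro s _
          exact mul_le_mul_of_nonneg_left (key H 0 s (by omega)) (hρ.1 s)
      _ = p * H := by rw [← Finset.sum_mul, hρ.2, one_mul]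
  linarith
end
end

section
/- Let p₁(s,a) = p₁(s)p₁(a|s) and p₂(s,a) = p₂(s)p₂(a|s) be two joint distributions over a product of finite sets S × A. Then D_TV(p₁(s,a), p₂(s,a)) ≤ D_TV(p₁(s), p₂(s)) + E_{s∼p₁}[D_TV(p₁(·|s), p₂(·|s))]. -/
open Finset

noncomputable section

attribute [local instance] Classical.propDecidable

variable {S A : Type*}

variable [Fintype S] [Fintype A]

/-- TV distance of joint distributions is bounded by TV of marginals plus expected TV of
conditionals. -/
theorem tv_joint_le_marginal_add_conditional
    (p₁ p₂ : S × A → ℝ) (m₁ m₂ : S → ℝ) (c₁ c₂ : S → A → ℝ)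
    (hm₁ : IsDist m₁) (hm₂ : IsDist m₂) (hc₁ : IsPolicy c₁) (hc₂ : IsPolicy c₂)
    (hp₁ : ∀ s a, p₁ (s, a) = m₁ s * c₁ s a)
    (hp₂ : ∀ s a, p₂ (s, a) = m₂ s * c₂ s a) :
    tvDist p₁ p₂ ≤ tvDist m₁ m₂ + ∑ s, m₁ s * tvDist (c₁ s) (c₂ s) := by
  have key : ∀ s a, |p₁ (s, a) - p₂ (s, a)| ≤
      |m₁ s - m₂ s| * c₂ s a + m₁ s * |c₁ s a - c₂ s a| := by
    intro s a
    rw [hp₁, hp₂]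
    have h1 : m₁ s * c₁ s a - m₂ s * c₂ s a
        = (m₁ s - m₂ s) * c₂ s a + m₁ s * (c₁ s a - c₂ s a) := by ring
    rw [h1]
    calc |(m₁ s - m₂ s) * c₂ s a + m₁ s * (c₁ s a - c₂ s a)|
        ≤ |(m₁ s - m₂ s) * c₂ s a| + |m₁ s * (c₁ s a - c₂ s a)| := abs_add_le _ _
      _ = |m₁ s - m₂ s| * c₂ s a + m₁ s * |c₁ s a - c₂ s a| := by
          rw [abs_mul, abs_mul, abs_of_nonneg ((hc₂ s).1 a), abs_of_nonneg (hm₁.1 s)]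
  have hsum : ∑ x : S × A, |p₁ x - p₂ x|
      ≤ ∑ s, (|m₁ s - m₂ s| + m₁ s * ∑ a, |c₁ s a - c₂ s a|) := by
    rw [Fintype.sum_prod_type]
    refine Finset.sum_le_sum fun s _ => ?_
    calc ∑ a, |p₁ (s, a) - p₂ (s, a)|
        ≤ ∑ a, (|m₁ s - m₂ s| * c₂ s a + m₁ s * |c₁ s a - c₂ s a|) :=
          Finset.sum_le_sum fun a _ => key s a
      _ = |m₁ s - m₂ s| + m₁ s * ∑ a, |c₁ s a - c₂ s a| := by
          rw [Finset.sum_add_distrib, ← Finset.mul_sum, ← Finset.mul_sum, (hc₂ s).2,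
            mul_one]
  unfold tvDist
  have : ∑ s, m₁ s * ((1:ℝ)/2 * ∑ a, |c₁ s a - c₂ s a|)
      = (1/2) * ∑ s, m₁ s * ∑ a, |c₁ s a - c₂ s a| := by
    rw [Finset.mul_sum]; exact Finset.sum_congr rfl fun s _ => by ring
  rw [this, ← mul_add]
  have h2 : ∑ s, |m₁ s - m₂ s| + ∑ s, m₁ s * ∑ a, |c₁ s a - c₂ s a|
      = ∑ s, (|m₁ s - m₂ s| + m₁ s * ∑ a, |c₁ s a - c₂ s a|) := by
    rw [Finset.sum_add_distrib]
  rw [h2]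
  linarith [hsum]
end
end

section
/- Behavioral cloning bound: Let π* be a deterministic expert policy and π a policy such that E_{s∼d^{π*}}[ℓ(s, π, π*)] = ε_b, where ℓ(s,π,π*) = Pr(π(s) ≠ π*(s)) is the 0-1 loss under the expert state distribution d^{π*} = (1/H)Σ_h d_h^{π*}. Then J(π*) − J(π) ≤ H² ε_b. -/
open Finset

noncomputable section

attribute [local instance] Classical.propDecidable

variable {S A : Type*}

variable [Fintype S] [Fintype A]

/-
Performance difference: telescoping between the hybrid policies "follow `π*` for `h` steps, then
`π`" gives `J(π*) − J(π) = Σₕ E_{s ∼ d_h^{π*}} [Q^π_{H-h}(s, π*) − Q^π_{H-h}(s, π)]`.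
Since `π*` is deterministic and `0 ≤ Q^π ≤ H`, each advantage is at most `H · Pr(π(s) ≠ π*(s))`,
and summing over the `H` steps gives `H · (H ε_b)`.
-/

theorem IsDist.sum_mul_le {X : Type*} [Fintype X] {p : X → ℝ} (hp : IsDist p) {g : X → ℝ}
    {c : ℝ} (hg : ∀ x, g x ≤ c) : ∑ x, p x * g x ≤ c :=
  calc ∑ x, p x * g x ≤ ∑ x, p x * c :=
        sum_le_sum fun x _ => mul_le_mul_of_nonneg_left (hg x) (hp.1 x)
    _ = c := by rw [← sum_mul, hp.2, one_mul]

theorem IsDist.sub_sum_mul_le {X : Type*} [Fintype X] {p : X → ℝ} (hp : IsDist p) {g : X → ℝ}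
    (hg : ∀ x, 0 ≤ g x) (x₀ : X) {c : ℝ} (hc : g x₀ ≤ c) :
    g x₀ - ∑ x, p x * g x ≤ c * (1 - p x₀) := by
  have hle_one : p x₀ ≤ 1 := hp.2 ▸ single_le_sum (fun x _ => hp.1 x) (mem_univ x₀)
  have hsingle : p x₀ * g x₀ ≤ ∑ x, p x * g x :=
    single_le_sum (f := fun x => p x * g x) (fun x _ => mul_nonneg (hp.1 x) (hg x)) (mem_univ x₀)
  nlinarith [hg x₀]

section

variable (P : S → A → S → ℝ) (r : S → A → ℝ) (ρ : S → ℝ)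

def stepReward (π : S → A → ℝ) (h : ℕ) : ℝ :=
  ∑ s, stateDist P ρ π h s * ∑ a, π s a * r s a

theorem Qn_const_eq_Qst (π : S → A → ℝ) (k t : ℕ) :
    Qn P r (fun _ => π) k t = Qst P r π k := by
  induction k generalizing t with
  | zero => rfl
  | succ k ih =>
    funext s a
    change Qn P r (fun _ => π) (k + 1) t s a = Qn P r (fun _ => π) (k + 1) 0 s a
    simp only [Qn, ih]

theorem Qst_succ (π : S → A → ℝ) (k : ℕ) (s : S) (a : A) :
    Qst P r π (k + 1) s a = r s a + ∑ s', P s a s' * QE P r π k s' π := by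
  change Qn P r (fun _ => π) (k + 1) 0 s a = _
  simp only [Qn, Qn_const_eq_Qst]
  rfl

theorem QE_zero (π π' : S → A → ℝ) (s : S) : QE P r π 0 s π' = 0 := by
  simp [QE, Qst, Qn]

theorem stateDist_succ (π : S → A → ℝ) (h : ℕ) (s' : S) :
    stateDist P ρ π (h + 1) s' = ∑ s, ∑ a, stateDist P ρ π h s * π s a * P s a s' :=
  rfl

theorem stateDist_nonneg {π : S → A → ℝ} (hP : IsKernel P) (hρ : IsDist ρ) (hπ : IsPolicy π)
    (h : ℕ) (s : S) : 0 ≤ stateDist P ρ π h s := by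
  induction h generalizing s with
  | zero => exact hρ.1 s
  | succ h ih =>
    rw [stateDist_succ]
    exact sum_nonneg fun s _ => sum_nonneg fun a _ =>
      mul_nonneg (mul_nonneg (ih s) ((hπ s).1 a)) ((hP s a).1 _)

theorem Qst_nonneg {π : S → A → ℝ} (hP : IsKernel P) (hr : ∀ s a, 0 ≤ r s a)
    (hπ : IsPolicy π) (k : ℕ) (s : S) (a : A) : 0 ≤ Qst P r π k s a := by
  induction k generalizing s a with
  | zero => simp [Qst, Qn]
  | succ k ih =>
    rw [Qst_succ]
    exact add_nonneg (hr s a) <| sum_nonneg fun s' _ => mul_nonneg ((hP s a).1 s') <|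
      sum_nonneg fun a' _ => mul_nonneg ((hπ s').1 a') (ih s' a')

theorem Qst_le {π : S → A → ℝ} (hP : IsKernel P) (hr : ∀ s a, r s a ≤ 1)
    (hπ : IsPolicy π) (k : ℕ) (s : S) (a : A) : Qst P r π k s a ≤ k := by
  induction k generalizing s a with
  | zero => simp [Qst, Qn]
  | succ k ih =>
    rw [Qst_succ, Nat.cast_succ, add_comm (k : ℝ)]
    exact add_le_add (hr s a) <| (hP s a).sum_mul_le fun s' => (hπ s').sum_mul_le (ih s')

theorem QE_of_deterministic (π : S → A → ℝ) {π' : S → A → ℝ} {f : S → A}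
    (hdet : ∀ s a, π' s a = if a = f s then 1 else 0) (k : ℕ) (s : S) :
    QE P r π k s π' = Qst P r π k s (f s) := by
  simp [QE, hdet]

theorem QE_succ (π π' : S → A → ℝ) (k : ℕ) (s : S) :
    QE P r π (k + 1) s π'
      = ∑ a, π' s a * r s a + ∑ a, π' s a * ∑ s', P s a s' * QE P r π k s' π := by
  rw [QE]
  simp only [Qst_succ, mul_add, sum_add_distrib]

theorem sum_stateDist_mul_QE_succ (π π' : S → A → ℝ) (h k : ℕ) :
    ∑ s, stateDist P ρ π' h s * QE P r π (k + 1) s π'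
      = stepReward P r ρ π' h + ∑ s, stateDist P ρ π' (h + 1) s * QE P r π k s π := by
  simp only [QE_succ, stepReward, stateDist_succ, mul_add, sum_add_distrib, mul_sum,
    sum_mul]
  congr 1
  conv_rhs => rw [Finset.sum_comm]
  apply Finset.sum_congr rfl
  intro s _
  conv_rhs => rw [Finset.sum_comm]
  simp only [mul_assoc]

theorem sum_stateDist_mul_QE_self (π : S → A → ℝ) (m h : ℕ) :
    ∑ s, stateDist P ρ π h s * QE P r π m s π
      = ∑ t ∈ range m, stepReward P r ρ π (h + t) := by
  induction m generalizing h with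
  | zero => simp [QE_zero]
  | succ m ih =>
    rw [sum_stateDist_mul_QE_succ, ih, sum_range_succ']
    simp only [add_zero, add_assoc, add_comm 1]
    ring

theorem J_eq_sum_stepReward (H : ℕ) (π : S → A → ℝ) :
    J P r ρ H π = ∑ h ∈ range H, stepReward P r ρ π h := by
  have h := sum_stateDist_mul_QE_self P r ρ π H 0
  simp only [zero_add] at h
  exact h

theorem performance_difference (H : ℕ) (π' π : S → A → ℝ) :
    J P r ρ H π' - J P r ρ H π
      = ∑ h ∈ range H, ∑ s,
          stateDist P ρ π' h s * (QE P r π (H - h) s π' - QE P r π (H - h) s π) := by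
  let hybrid (h : ℕ) : ℝ := ∑ t ∈ range h, stepReward P r ρ π' t
      + ∑ s, stateDist P ρ π' h s * QE P r π (H - h) s π
  have hstart : hybrid 0 = J P r ρ H π := by
    simp only [hybrid, range_zero, sum_empty, zero_add, Nat.sub_zero]
    rfl
  have hend : hybrid H = J P r ρ H π' := by simp [hybrid, QE_zero, J_eq_sum_stepReward]
  have hstep : ∀ h ∈ range H, hybrid (h + 1) - hybrid h
      = ∑ s, stateDist P ρ π' h s * (QE P r π (H - h) s π' - QE P r π (H - h) s π) := by
    intro h hh
    obtain ⟨k, hk⟩ : ∃ k, H - h = k + 1 := ⟨H - h - 1, by grind⟩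
    have hk' : H - (h + 1) = k := by omega
    simp only [hybrid, mul_sub, sum_sub_distrib, sum_range_succ, hk, hk',
      sum_stateDist_mul_QE_succ]
    ring
  rw [← hstart, ← hend, ← sum_range_sub, sum_congr rfl hstep]

end

/-- Behavioral cloning bound: if the expected 0-1 loss of `π` against the deterministic
expert `π*` under the expert's average state distribution is `ε_b`, then
`J(π*) − J(π) ≤ H² ε_b`. -/
theorem bc_bound
    (P : S → A → S → ℝ) (r : S → A → ℝ) (ρ : S → ℝ) (H : ℕ)
    (hP : IsKernel P) (hρ : IsDist ρ) (hr : ∀ s a, 0 ≤ r s a ∧ r s a ≤ 1)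
    (πstar π : S → A → ℝ) (hstar : IsPolicy πstar) (hπ : IsPolicy π)
    (f : S → A) (hdet : ∀ s a, πstar s a = if a = f s then 1 else 0)
    (εb : ℝ)
    (hloss : (1 / (H : ℝ)) * ∑ h ∈ Finset.range H, ∑ s,
      stateDist P ρ πstar h s * (1 - π s (f s)) = εb) :
    J P r ρ H πstar - J P r ρ H π ≤ (H : ℝ)^2 * εb := by
  have hadvantage (h : ℕ) (s : S) :
      QE P r π (H - h) s πstar - QE P r π (H - h) s π ≤ H * (1 - π s (f s)) := by
    rw [QE_of_deterministic P r π hdet]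
    refine (hπ s).sub_sum_mul_le (Qst_nonneg P r hP (fun s a => (hr s a).1) hπ _ s) (f s) ?_
    exact (Qst_le P r hP (fun s a => (hr s a).2) hπ _ s _).trans (by exact_mod_cast H.sub_le h)
  have hloss' : ∑ h ∈ range H, ∑ s, stateDist P ρ πstar h s * (1 - π s (f s)) = H * εb := by
    rcases eq_or_ne H 0 with rfl | hH
    · simp
    · rw [← hloss]
      field_simp
  calc J P r ρ H πstar - J P r ρ H π
      = ∑ h ∈ range H, ∑ s, stateDist P ρ πstar h s *
          (QE P r π (H - h) s πstar - QE P r π (H - h) s π) :=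
        performance_difference P r ρ H πstar π
    _ ≤ ∑ h ∈ range H, ∑ s, stateDist P ρ πstar h s * (H * (1 - π s (f s))) := by
      gcongr with h _ s
      · exact stateDist_nonneg P ρ hP hρ hstar h s
      · exact hadvantage h s
    _ = (H : ℝ) ^ 2 * εb := by
      simp only [mul_left_comm _ (H : ℝ), ← mul_sum, hloss']
      ring
end
end

section
/- Exponential weights regret bound (normalized EG): Running the normalized exponentiated-gradient algorithm with step size η = 1/2 on a sequence of linear losses ⟨z_i, ·⟩ over the probability simplex Δ_A, where 0 ≤ z_i ≤ 1 coordinatewise, produces iterates w_1,…,w_T such that for any u ∈ Δ_A with Σ_{i=1}^T ⟨z_i, u⟩ = 0, it holds that Σ_{i=1}^T ⟨w_i − u, z_i⟩ ≤ 4 log|A|. -/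
/-!
Some expert `a` incurs zero loss in every round, since the comparator `u` puts positive mass on
it. Unrolling the update, `w_T(a) = w_0(a) / ∏_{i<T} Z_i` where `Z_i = ∑_b w_i(b) e^{-η z_i(b)}`
is the normaliser, so `∏ Z_i ≥ 1 / |A|` as `w_T(a) ≤ 1`. On the other hand
`e^{-x} ≤ 1 - x/2 ≤ e^{-x/2}` on `[0, 1]` gives `Z_i ≤ exp (-(η/2) ⟨w_i, z_i⟩)`. Comparing the two
bounds, the algorithm's total loss is at most `(2/η) log |A|`, which is the regret because `u` has
zero total loss.
-/

open Finset Real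

theorem Real.exp_neg_le_one_sub_half {x : ℝ} (hx0 : 0 ≤ x) (hx1 : x ≤ 1) :
    exp (-x) ≤ 1 - x / 2 := by
  have hinv : exp (-x) * exp x = 1 := by rw [← exp_add, neg_add_cancel, exp_zero]
  nlinarith [add_one_le_exp x, exp_pos (-x)]

section ExponentiatedGradient

variable {A : Type*} [Fintype A]

noncomputable def egNormalizer (η : ℝ) (p y : A → ℝ) : ℝ :=
  ∑ a, p a * exp (-η * y a)

theorem egNormalizer_pos [Nonempty A] {η : ℝ} {p : A → ℝ} (hp : ∀ a, 0 < p a) (y : A → ℝ) :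
    0 < egNormalizer η p y :=
  sum_pos (fun a _ => mul_pos (hp a) (exp_pos _)) univ_nonempty

theorem egNormalizer_le_exp {η : ℝ} (hη0 : 0 ≤ η) (hη1 : η ≤ 1) {p y : A → ℝ}
    (hp0 : ∀ a, 0 ≤ p a) (hp1 : ∑ a, p a = 1) (hy : ∀ a, 0 ≤ y a ∧ y a ≤ 1) :
    egNormalizer η p y ≤ exp (-(η / 2) * ∑ a, p a * y a) :=
  calc egNormalizer η p y ≤ ∑ a, p a * (1 - η * y a / 2) := by
        refine sum_le_sum fun a _ => mul_le_mul_of_nonneg_left ?_ (hp0 a)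
        rw [neg_mul]
        exact exp_neg_le_one_sub_half (mul_nonneg hη0 (hy a).1)
          (mul_le_one₀ hη1 (hy a).1 (hy a).2)
    _ = ∑ a, (-(η / 2) * (p a * y a) + p a) := sum_congr rfl fun a _ => by ring
    _ = -(η / 2) * ∑ a, p a * y a + 1 := by rw [sum_add_distrib, ← mul_sum, hp1]
    _ ≤ exp (-(η / 2) * ∑ a, p a * y a) := add_one_le_exp _

variable {η : ℝ} {z w : ℕ → A → ℝ}
  (hwstep : ∀ i a, w (i + 1) a = w i a * exp (-η * z i a) / egNormalizer η (w i) (z i))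
include hwstep

theorem eg_weight_pos (hw0 : ∀ a, 0 < w 0 a) (i : ℕ) (a : A) : 0 < w i a := by
  have : Nonempty A := ⟨a⟩
  induction i generalizing a with
  | zero => exact hw0 a
  | succ i ih =>
    rw [hwstep]
    exact div_pos (mul_pos (ih a) (exp_pos _)) (egNormalizer_pos ih _)

theorem eg_weight_sum_eq_one [Nonempty A] (hw0 : ∀ a, 0 < w 0 a) (hsum0 : ∑ a, w 0 a = 1)
    (i : ℕ) : ∑ a, w i a = 1 := by
  cases i with
  | zero => exact hsum0
  | succ i =>
    simp only [hwstep, ← sum_div]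
    exact div_self (egNormalizer_pos (eg_weight_pos hwstep hw0 i) _).ne'

theorem eg_weight_eq_div_prod (m : ℕ) (a : A) :
    w m a = w 0 a * exp (-η * ∑ i ∈ range m, z i a) /
      ∏ i ∈ range m, egNormalizer η (w i) (z i) := by
  induction m with
  | zero => simp
  | succ m ih =>
    rw [hwstep, ih, sum_range_succ, prod_range_succ, mul_add, exp_add]
    ring

theorem eg_loss_le_of_zero_loss (hη0 : 0 < η) (hη1 : η ≤ 1)
    (hz : ∀ i a, 0 ≤ z i a ∧ z i a ≤ 1) (hw0 : ∀ a, w 0 a = 1 / (Fintype.card A : ℝ))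
    (T : ℕ) {a : A} (ha : ∀ i ∈ range T, z i a = 0) :
    ∑ i ∈ range T, ∑ b, w i b * z i b ≤ 2 / η * log (Fintype.card A : ℝ) := by
  have : Nonempty A := ⟨a⟩
  have hcard : (0 : ℝ) < Fintype.card A := Nat.cast_pos.2 Fintype.card_pos
  have hw0pos : ∀ b, 0 < w 0 b := fun b => by rw [hw0]; positivity
  have hpos := eg_weight_pos hwstep hw0pos
  have hsum := eg_weight_sum_eq_one hwstep hw0pos (by simp [hw0, hcard.ne'])
  set P := ∏ i ∈ range T, egNormalizer η (w i) (z i)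
  have hwT : w T a = (Fintype.card A : ℝ)⁻¹ / P := by
    rw [eg_weight_eq_div_prod hwstep, sum_eq_zero ha, hw0]
    simp [P]
  have hP_lower : (Fintype.card A : ℝ)⁻¹ ≤ P := by
    have hwT_le : w T a ≤ 1 := hsum T ▸ single_le_sum (fun b _ => (hpos T b).le) (mem_univ a)
    have hP : 0 < P := prod_pos fun i _ => egNormalizer_pos (hpos i) _
    rwa [hwT, div_le_one hP] at hwT_le
  have hP_upper : P ≤ exp (-(η / 2) * ∑ i ∈ range T, ∑ b, w i b * z i b) := by
    rw [mul_sum, exp_sum]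
    exact prod_le_prod (fun i _ => (egNormalizer_pos (hpos i) _).le) fun i _ =>
      egNormalizer_le_exp hη0.le hη1 (fun b => (hpos i b).le) (hsum i) (hz i)
  have hlog := (log_le_iff_le_exp (by positivity)).2 (hP_lower.trans hP_upper)
  rw [log_inv] at hlog
  rw [div_mul_eq_mul_div, le_div_iff₀ hη0]
  linarith

end ExponentiatedGradient

theorem eq_zero_of_sum_sum_mul_eq_zero {ι A : Type*} [Fintype A] {s : Finset ι} {u : A → ℝ}
    {y : ι → A → ℝ} (hu : ∀ a, 0 ≤ u a) (hy : ∀ i a, 0 ≤ y i a)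
    (h : ∑ i ∈ s, ∑ b, u b * y i b = 0) {a : A} (ha : 0 < u a) : ∀ i ∈ s, y i a = 0 := by
  intro i hi
  have hinner := (sum_eq_zero_iff_of_nonneg fun j _ =>
    sum_nonneg fun b _ => mul_nonneg (hu b) (hy j b)).1 h i hi
  have := (sum_eq_zero_iff_of_nonneg fun b _ => mul_nonneg (hu b) (hy i b)).1 hinner a
    (mem_univ a)
  exact (mul_eq_zero.1 this).resolve_left ha.ne'

theorem normalized_eg_regret_general
    {A : Type*} [Fintype A]
    (T : ℕ) (z : ℕ → A → ℝ) (hz : ∀ i a, 0 ≤ z i a ∧ z i a ≤ 1)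
    (w : ℕ → A → ℝ)
    (hw0 : ∀ a, w 0 a = 1 / (Fintype.card A : ℝ))
    (hwstep : ∀ i a, w (i + 1) a =
      w i a * Real.exp (-(1/2) * z i a) / ∑ b, w i b * Real.exp (-(1/2) * z i b))
    (u : A → ℝ) (hu : (∀ a, 0 ≤ u a) ∧ ∑ a, u a = 1)
    (huz : ∑ i ∈ Finset.range T, ∑ a, u a * z i a = 0) :
    ∑ i ∈ Finset.range T, ∑ a, (w i a - u a) * z i a ≤
      4 * Real.log (Fintype.card A : ℝ) := by
  obtain ⟨a, ha⟩ : ∃ a, 0 < u a := by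
    simpa using exists_lt_of_sum_lt (s := univ) (f := 0) (g := u) (by simp [hu.2])
  have hloss := eg_loss_le_of_zero_loss hwstep (by norm_num) (by norm_num) hz hw0 T
    (eq_zero_of_sum_sum_mul_eq_zero hu.1 (fun i a => (hz i a).1) huz ha)
  simp only [sub_mul, sum_sub_distrib, huz, sub_zero]
  norm_num at hloss
  exact hloss

/-- Normalized exponentiated-gradient (exponential weights) regret bound with step size
`η = 1/2` on linear losses `z_i ∈ [0,1]^A`: for any comparator `u` in the simplex with
zero total loss, the regret is at most `4 log |A|`. -/
theorem normalized_eg_regret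
    {A : Type*} [Fintype A] [Nonempty A]
    (T : ℕ) (z : ℕ → A → ℝ) (hz : ∀ i a, 0 ≤ z i a ∧ z i a ≤ 1)
    (w : ℕ → A → ℝ)
    (hw0 : ∀ a, w 0 a = 1 / (Fintype.card A : ℝ))
    (hwstep : ∀ i a, w (i + 1) a =
      w i a * Real.exp (-(1/2) * z i a) / ∑ b, w i b * Real.exp (-(1/2) * z i b))
    (u : A → ℝ) (hu : (∀ a, 0 ≤ u a) ∧ ∑ a, u a = 1)
    (huz : ∑ i ∈ Finset.range T, ∑ a, u a * z i a = 0) :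
    ∑ i ∈ Finset.range T, ∑ a, (w i a - u a) * z i a ≤
      4 * Real.log (Fintype.card A : ℝ) :=
  normalized_eg_regret_general T z hz w hw0 hwstep u hu huz
end
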